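/- arXiv:1809.00247 — 4 statements merged into one kernel-verified Lean document; each statement's English description precedes it below -/
import Mathlib

section
/- Let Ω ∈ ℝ and Z_∞ > 0 be constants, and let Z, λ, M, A : ℝ → ℝ be differentiable functions with Z(s) > 0, λ(s) ≠ 0 and 1 + M(s) ≠ 0 for all s. Define Z̄ = Z/Z_∞, η = Z′/Z, λ̄ = λ/Z², B̄ = −Ω/(1+M)², β_m = M′ and β_λ = λ′/Z² − 2ηλ̄. Assume that for all s: (i) Z̄ = 1 − 2λ·(A + (Z̄/Z²)·B̄) (the Ward identity in the melonic sector), and (ii) λ′ = −2λ²·A′ (the derivative of the melonic structure equation). Then for all s: β_λ = −η·λ̄·(1 − 2λ̄Ω/(1+M)²) + 4λ̄²·Ω·β_m/(1+M)³. -/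
/-- Ward-identity constraint in the purely melonic sector. With
`Z̄ = Z/Z_∞`, `η = Z'/Z`, `λ̄ = λ/Z²`, `B̄ = -Ω/(1+M)²`, `β_m = M'` and
`β_λ = λ'/Z² - 2ηλ̄`, if the Ward identity `Z̄ = 1 - 2λ(A + (Z̄/Z²)B̄)` and the melonic
structure equation `λ' = -2λ² A'` hold for all `s`, then
`β_λ = -ηλ̄(1 - 2λ̄Ω/(1+M)²) + 4λ̄² Ω β_m/(1+M)³` for all `s`. -/
theorem melonic_ward_constraint
    (Ω Zinf : ℝ) (hZinf : 0 < Zinf)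
    (Z lam M A : ℝ → ℝ)
    (hZdiff : Differentiable ℝ Z) (hlamdiff : Differentiable ℝ lam)
    (hMdiff : Differentiable ℝ M) (hAdiff : Differentiable ℝ A)
    (hZpos : ∀ s, 0 < Z s) (hlamne : ∀ s, lam s ≠ 0) (hMne : ∀ s, 1 + M s ≠ 0)
    (hWard : ∀ s, Z s / Zinf
      = 1 - 2 * lam s * (A s + (Z s / Zinf) / (Z s) ^ 2 * (-Ω / (1 + M s) ^ 2)))
    (hstruct : ∀ s, deriv lam s = -2 * (lam s) ^ 2 * deriv A s) :
    ∀ s, deriv lam s / (Z s) ^ 2 - 2 * (deriv Z s / Z s) * (lam s / (Z s) ^ 2)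
      = -(deriv Z s / Z s) * (lam s / (Z s) ^ 2)
          * (1 - 2 * (lam s / (Z s) ^ 2) * Ω / (1 + M s) ^ 2)
        + 4 * (lam s / (Z s) ^ 2) ^ 2 * Ω * deriv M s / (1 + M s) ^ 3 := by
  have hZne : ∀ t, Z t ≠ 0 := fun t => (hZpos t).ne'
  have hZinf' : Zinf ≠ 0 := hZinf.ne'
  have hC1 : ∀ t, (Z t)^2*(1+M t)^2
      = Zinf*Z t*(1+M t)^2 - 2*lam t*A t*(Zinf*Z t*(1+M t)^2) + 2*lam t*Ω := by
    intro t
    have h := hWard t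
    have hz := hZne t
    have hm := hMne t
    field_simp at h
    have key : (Zinf * Z t) * ((Z t)^2*(1+M t)^2)
        = (Zinf * Z t) * (Zinf*Z t*(1+M t)^2 - 2*lam t*A t*(Zinf*Z t*(1+M t)^2) + 2*lam t*Ω) := by
      linear_combination (Zinf * Z t) * h
    exact mul_left_cancel₀ (mul_ne_zero hZinf' hz) key
  intro s
  have hZ := (hZdiff s).hasDerivAt
  have hl := (hlamdiff s).hasDerivAt
  have hM := (hMdiff s).hasDerivAt
  have hA := (hAdiff s).hasDerivAt
  have hu : HasDerivAt (fun t => 1 + M t) (deriv M s) s := hM.const_add 1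
  have hu2 := hu.pow 2
  have hT1 := (hZ.pow 2).mul hu2
  have hT2 := (hZ.const_mul Zinf).mul hu2
  have hT3 := ((hl.const_mul 2).mul hA).mul hT2
  have hT4 := (hl.const_mul 2).mul_const Ω
  have hF := hT1.sub ((hT2.sub hT3).add hT4)
  have hzero : (fun t => (Z t)^2*(1+M t)^2
      - (Zinf*Z t*(1+M t)^2 - 2*lam t*A t*(Zinf*Z t*(1+M t)^2) + 2*lam t*Ω))
      = fun _ => (0:ℝ) := funext fun t => by rw [hC1 t]; ring
  replace hF : HasDerivAt (fun t => (Z t)^2*(1+M t)^2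
      - (Zinf*Z t*(1+M t)^2 - 2*lam t*A t*(Zinf*Z t*(1+M t)^2) + 2*lam t*Ω)) _ s := hF
  rw [hzero] at hF
  simp only [Pi.pow_apply, Pi.mul_apply, Nat.cast_ofNat] at hF
  have hC2 := hF.unique (hasDerivAt_const s 0)
  have h1 := hC1 s
  have h3 := hstruct s
  have hz := hZne s
  have hm := hMne s
  have hkey : deriv lam s * (Z s)^3 * (1+M s)^3
      = deriv Z s * lam s * (Z s)^2 * (1+M s)^3 + 2 * deriv Z s * (lam s)^2 * Ω * (1+M s)
        + 4 * deriv M s * Z s * (lam s)^2 * Ω := by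
    linear_combination (-(Z s * (1+M s) * lam s)) * hC2
      + (Zinf * (Z s)^2 * (1+M s)^3) * h3
      + (deriv lam s * Z s * (1+M s) + deriv Z s * lam s * (1+M s) + 2 * deriv M s * Z s * lam s) * h1
  field_simp
  linear_combination hkey
end

section
/- Consider the map B : ℝ⁴ → ℝ⁴ given by B(x₁,x₂,x₃,x₄) = (−2x₁ − 10π(πx₂ + (16/3)x₃), −4π(πx₂ + (16/3)x₃)·x₂, −x₃ − 8π·x₄, −12π(πx₂ + (16/3)x₃)·x₄). Then B(0) = 0, the derivative of B at 0 is the linear map represented by the 4×4 matrix with rows (−2, −10π², −160π/3, 0), (0,0,0,0), (0,0,−1,−8π), (0,0,0,0), and the characteristic polynomial of this matrix is X²·(X+1)·(X+2); in particular its eigenvalues are 0, 0, −1, −2. -/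
open Real Polynomial

/-- The leading-order beta-function map around the Gaussian fixed point, in the
coordinates `(m̄², λ̄₄₁, λ̄₄₂, λ̄₆₁)`. -/
noncomputable def gaussianFlowMap (x : Fin 4 → ℝ) : Fin 4 → ℝ :=
  ![-2 * x 0 - 10 * π * (π * x 1 + (16 / 3) * x 2),
    -4 * π * (π * x 1 + (16 / 3) * x 2) * x 1,
    -(x 2) - 8 * π * x 3,
    -12 * π * (π * x 1 + (16 / 3) * x 2) * x 3]

/-- The stability matrix of the flow at the Gaussian fixed point. -/
noncomputable def gaussianStabilityMatrix : Matrix (Fin 4) (Fin 4) ℝ :=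
  !![-2, -10 * π ^ 2, -160 * π / 3, 0;
     0, 0, 0, 0;
     0, 0, -1, -8 * π;
     0, 0, 0, 0]

private lemma eigen_of_vec (v : Fin 4 → ℝ) (μ : ℝ)
    (h : gaussianStabilityMatrix.mulVec v = μ • v) (hv : v ≠ 0) :
    Module.End.HasEigenvalue (Matrix.toLin' gaussianStabilityMatrix) μ :=
  Module.End.hasEigenvalue_of_hasEigenvector
    ⟨Module.End.mem_eigenspace_iff.2 (by simpa [Matrix.toLin'_apply] using h), hv⟩

set_option maxHeartbeats 2000000 in
/-- the Gaussian point is a fixed point of the leading-order flow, the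
derivative of the flow map at `0` is the linear map represented by the stability matrix,
whose characteristic polynomial is `X²(X+1)(X+2)`; in particular its eigenvalues are
`0, 0, -1, -2`. -/
theorem gaussian_fixed_point_stability :
    gaussianFlowMap 0 = 0 ∧
    fderiv ℝ gaussianFlowMap 0
      = (Matrix.toLin' gaussianStabilityMatrix).toContinuousLinearMap ∧
    gaussianStabilityMatrix.charpoly = X ^ 2 * (X + 1) * (X + 2) ∧
    Module.End.HasEigenvalue (Matrix.toLin' gaussianStabilityMatrix) 0 ∧
    Module.End.HasEigenvalue (Matrix.toLin' gaussianStabilityMatrix) (-1) ∧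
    Module.End.HasEigenvalue (Matrix.toLin' gaussianStabilityMatrix) (-2) := by
  refine ⟨?_, ?_, ?_, ?_, ?_, ?_⟩
  · funext i
    fin_cases i <;> simp [gaussianFlowMap]
  · have key : HasFDerivAt gaussianFlowMap
        ((Matrix.toLin' gaussianStabilityMatrix).toContinuousLinearMap) 0 := by
      apply hasFDerivAt_pi''
      intro i
      have hp : ∀ i : Fin 4, HasFDerivAt (fun x : Fin 4 → ℝ => x i)
          (ContinuousLinearMap.proj i : (Fin 4 → ℝ) →L[ℝ] ℝ) (0 : Fin 4 → ℝ) :=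
        fun i => by exact hasFDerivAt_apply i 0
      have hg : HasFDerivAt (fun x : Fin 4 → ℝ => π * x 1 + 16 / 3 * x 2)
          (π • ContinuousLinearMap.proj (1 : Fin 4) + (16 / 3 : ℝ) • ContinuousLinearMap.proj (2 : Fin 4)) 0 :=
        ((hp 1).const_mul π).add ((hp 2).const_mul (16 / 3))
      fin_cases i
      · refine HasFDerivAt.congr_fderiv
          (((hp 0).const_mul (-2)).sub
            (hg.const_mul (10 * π))) ?_ |>.congr_of_eventuallyEq
            (by filter_upwards with x; simp [gaussianFlowMap])
        ext v
        simp [Matrix.toLin'_apply, Matrix.mulVec, dotProduct, Fin.sum_univ_four,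
          gaussianStabilityMatrix]
        try ring
      · refine HasFDerivAt.congr_fderiv
          ((hg.const_mul (-4 * π)).mul (hp 1)) ?_
          |>.congr_of_eventuallyEq
            (by filter_upwards with x; simp [gaussianFlowMap]; try ring)
        ext v
        simp [Matrix.toLin'_apply, Matrix.mulVec, dotProduct, Fin.sum_univ_four,
          gaussianStabilityMatrix]
      · refine HasFDerivAt.congr_fderiv
          (((hp 2).const_mul (-1)).add
            ((hp 3).const_mul (-8 * π))) ?_
          |>.congr_of_eventuallyEq
            (by filter_upwards with x; simp [gaussianFlowMap]; try ring)
        ext v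
        simp [Matrix.toLin'_apply, Matrix.mulVec, dotProduct, Fin.sum_univ_four,
          gaussianStabilityMatrix]
        try ring
      · refine HasFDerivAt.congr_fderiv
          ((hg.const_mul (-12 * π)).mul (hp 3)) ?_
          |>.congr_of_eventuallyEq
            (by filter_upwards with x; simp [gaussianFlowMap]; try ring)
        ext v
        simp [Matrix.toLin'_apply, Matrix.mulVec, dotProduct, Fin.sum_univ_four,
          gaussianStabilityMatrix]
    exact key.fderiv
  · have ht : (Matrix.charmatrix gaussianStabilityMatrix).BlockTriangular id := by
      intro i j hij
      fin_cases i <;> fin_cases j <;>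
        first
          | exact absurd hij (by decide)
          | simp [Matrix.charmatrix_apply, Matrix.diagonal_apply, gaussianStabilityMatrix, Matrix.vecHead, Matrix.vecTail]
    rw [Matrix.charpoly, Matrix.det_of_upperTriangular ht, Fin.prod_univ_four]
    simp [Matrix.charmatrix_apply_eq, gaussianStabilityMatrix, map_ofNat]
    ring
  · exact eigen_of_vec ![-5 * π ^ 2, 1, 0, 0] 0
      (by funext i; fin_cases i <;>
        (simp [Matrix.mulVec, dotProduct, Fin.sum_univ_four, gaussianStabilityMatrix];
         try ring))
      (by intro h; simpa using congrFun h 1)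
  · exact eigen_of_vec ![-160 * π / 3, 0, 1, 0] (-1)
      (by funext i; fin_cases i <;>
        (simp [Matrix.mulVec, dotProduct, Fin.sum_univ_four, gaussianStabilityMatrix];
         try ring))
      (by intro h; simpa using congrFun h 2)
  · exact eigen_of_vec ![1, 0, 0, 0] (-2)
      (by funext i; fin_cases i <;>
        (simp [Matrix.mulVec, dotProduct, Fin.sum_univ_four, gaussianStabilityMatrix];
         try ring))
      (by intro h; simpa using congrFun h 0)
end

section
/- Let m ≥ 1 and n be natural numbers, let s, η, M, Z, q be real numbers with Z > 0, M > −1 and 0 ≤ q ≤ e^{2s}. Then ∫_{{x ∈ ℝ^m : ‖x‖² ≤ e^{2s} − q}} Z·(η·(e^{2s} − q − ‖x‖²) + 2e^{2s}) / (Z·e^{2s}·(1+M))^n dx = (Ω_m · Z^{1−n} · e^{−2ns} / (1+M)^n) · [2e^{2s} + η·(e^{2s} − (m/(m+2))·(e^{2s} − q) − q)] · (e^{2s} − q)^{m/2}, where Ω_m denotes the Lebesgue volume of the unit ball of ℝ^m. -/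
open Real MeasureTheory

/-- evaluation of the regulated loop integral with the Litim regulator in
the integral approximation. For `m ≥ 1`, `Z > 0`, `M > -1` and `0 ≤ q ≤ e^{2s}`,
`∫_{‖x‖² ≤ e^{2s}-q} Z(η(e^{2s}-q-‖x‖²)+2e^{2s})/(Ze^{2s}(1+M))^n dx
  = Ω_m Z^{1-n} e^{-2ns}/(1+M)^n ⬝ [2e^{2s} + η(e^{2s} - (m/(m+2))(e^{2s}-q) - q)]
    ⬝ (e^{2s}-q)^{m/2}`,
where `Ω_m` is the Lebesgue volume of the unit ball of `ℝ^m`. -/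
theorem litim_loop_integral (m n : ℕ) (hm : 1 ≤ m)
    (s η M Z q : ℝ) (hZ : 0 < Z) (hM : -1 < M)
    (hq0 : 0 ≤ q) (hq : q ≤ exp (2 * s)) :
    (∫ x in {x : EuclideanSpace ℝ (Fin m) | ‖x‖ ^ 2 ≤ exp (2 * s) - q},
        Z * (η * (exp (2 * s) - q - ‖x‖ ^ 2) + 2 * exp (2 * s))
          / (Z * exp (2 * s) * (1 + M)) ^ n)
      = (volume (Metric.ball (0 : EuclideanSpace ℝ (Fin m)) 1)).toReal
          * Z ^ ((1 : ℤ) - n) * exp (-2 * n * s) / (1 + M) ^ n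
          * (2 * exp (2 * s)
              + η * (exp (2 * s) - ((m : ℝ) / (m + 2)) * (exp (2 * s) - q) - q))
          * (exp (2 * s) - q) ^ ((m : ℝ) / 2) := by
  haveI : Nonempty (Fin m) := ⟨⟨0, hm⟩⟩
  haveI : Nontrivial (EuclideanSpace ℝ (Fin m)) := (WithLp.equiv 2 (Fin m → ℝ)).nontrivial
  set E := exp (2 * s) with hE
  have hEpos : 0 < E := exp_pos _
  set R2 := E - q with hR2
  have hR2nn : 0 ≤ R2 := sub_nonneg.2 hq
  set R := Real.sqrt R2 with hRdef
  have hRnn : 0 ≤ R := Real.sqrt_nonneg _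
  have hRsq : R ^ 2 = R2 := Real.sq_sqrt hR2nn
  set C : ℝ := (Z * E * (1 + M)) ^ n with hC
  have hMpos : 0 < 1 + M := by linarith
  have hCpos : 0 < C := pow_pos (by positivity) n
  -- the domain is a closed ball
  have hset : {x : EuclideanSpace ℝ (Fin m) | ‖x‖ ^ 2 ≤ R2}
      = Metric.closedBall (0 : EuclideanSpace ℝ (Fin m)) R := by
    ext x
    simp only [Set.mem_setOf_eq, Metric.mem_closedBall, dist_zero_right]
    exact ((Real.le_sqrt (norm_nonneg x) hR2nn)).symm
  rw [hset]
  -- reduce to a radial integral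
  set f : ℝ → ℝ := fun r => if r ≤ R then Z * (η * (R2 - r ^ 2) + 2 * E) / C else 0 with hf
  have hind : ∀ x : EuclideanSpace ℝ (Fin m),
      (Metric.closedBall (0 : EuclideanSpace ℝ (Fin m)) R).indicator
        (fun x => Z * (η * (R2 - ‖x‖ ^ 2) + 2 * E) / C) x = f ‖x‖ := by
    intro x
    by_cases h : ‖x‖ ≤ R <;>
      simp [hf, Set.indicator, Metric.mem_closedBall, dist_zero_right, h]
  rw [← integral_indicator Metric.isClosed_closedBall.measurableSet]
  simp only [hind]
  rw [integral_fun_norm_addHaar (volume : Measure (EuclideanSpace ℝ (Fin m))) f]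
  have hdim : Module.finrank ℝ (EuclideanSpace ℝ (Fin m)) = m := finrank_euclideanSpace_fin
  rw [hdim]
  -- evaluate the 1D integral
  have hfy : ∀ y : ℝ, y ^ (m - 1) • f y
      = (Set.Iic R).indicator (fun r => r ^ (m - 1) * (Z * (η * (R2 - r ^ 2) + 2 * E) / C)) y := by
    intro y
    by_cases h : y ≤ R <;> simp [hf, Set.indicator, h]
  simp only [hfy]
  rw [setIntegral_indicator measurableSet_Iic, Set.Ioi_inter_Iic,
    ← intervalIntegral.integral_of_le hRnn]
  have hsplit : ∀ y : ℝ, y ^ (m - 1) * (Z * (η * (R2 - y ^ 2) + 2 * E) / C)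
      = (Z * (η * R2 + 2 * E) / C) * y ^ (m - 1) - (Z * η / C) * y ^ (m + 1) := by
    intro y
    have h1 : y ^ (m + 1) = y ^ (m - 1) * y ^ 2 := by
      rw [← pow_add]; congr 1; omega
    rw [h1]; ring
  simp only [hsplit]
  have hint1 : IntervalIntegrable (fun y : ℝ => (Z * (η * R2 + 2 * E) / C) * y ^ (m - 1))
      volume 0 R := (continuous_const.mul (continuous_pow _)).intervalIntegrable _ _
  have hint2 : IntervalIntegrable (fun y : ℝ => (Z * η / C) * y ^ (m + 1))
      volume 0 R := (continuous_const.mul (continuous_pow _)).intervalIntegrable _ _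
  rw [intervalIntegral.integral_sub hint1 hint2, intervalIntegral.integral_const_mul,
    intervalIntegral.integral_const_mul, integral_pow, integral_pow]
  have hm1 : m - 1 + 1 = m := by omega
  rw [hm1]
  have h0m : (0 : ℝ) ^ m = 0 := zero_pow (by omega)
  have h0m2 : (0 : ℝ) ^ (m + 1 + 1) = 0 := zero_pow (by omega)
  rw [h0m, h0m2]
  -- powers of R
  have hRm : R ^ m = R2 ^ ((m : ℝ) / 2) := by
    rw [hRdef, ← Real.rpow_natCast (Real.sqrt R2) m, Real.sqrt_eq_rpow,
      ← Real.rpow_mul hR2nn]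
    norm_num
    ring_nf
  have hRm2 : R ^ (m + 1 + 1) = R2 ^ ((m : ℝ) / 2) * R2 := by
    have : R ^ (m + 1 + 1) = R ^ m * R ^ 2 := by rw [← pow_add]
    rw [this, hRm, hRsq]
  rw [hRm, hRm2]
  -- exponentials and powers of Z
  have hEn : exp (-2 * (n : ℝ) * s) = (E ^ n)⁻¹ := by
    rw [hE, ← Real.exp_nat_mul, ← Real.exp_neg]
    ring_nf
  have hZn : Z ^ ((1 : ℤ) - (n : ℤ)) = Z / Z ^ n := by
    rw [zpow_sub₀ hZ.ne', zpow_one, zpow_natCast]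
  rw [hEn, hZn]
  have hq' : q = E - R2 := by rw [hR2]; ring
  rw [hq']
  have hCe : C = Z ^ n * E ^ n * (1 + M) ^ n := by rw [hC, mul_pow, mul_pow]
  rw [hCe]
  have hZn' : (Z : ℝ) ^ n ≠ 0 := (pow_pos hZ n).ne'
  have hEn' : (E : ℝ) ^ n ≠ 0 := (pow_pos hEpos n).ne'
  have hMn' : ((1 + M) : ℝ) ^ n ≠ 0 := (pow_pos hMpos n).ne'
  have hmne : (m : ℝ) ≠ 0 := Nat.cast_ne_zero.2 (by omega)
  have hm2ne : (m : ℝ) + 2 ≠ 0 := by positivity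
  rw [nsmul_eq_mul, smul_eq_mul]
  push_cast [Nat.cast_sub hm, measureReal_def, sub_add_cancel]
  field_simp
  ring
end

section
/- Let m ≥ 1 and n be natural numbers, let s, η, M, Z be real numbers with Z > 0 and M > −1. Define I : [0, e^{2s}] → ℝ by I(q) = ∫_{{x ∈ ℝ^m : ‖x‖² ≤ e^{2s} − q}} Z·(η·(e^{2s} − q − ‖x‖²) + 2e^{2s}) / (Z·e^{2s}·(1+M))^n dx. Then I is differentiable at q = 0 with I′(0) = −Ω_m · Z^{1−n} · e^{(m−2n)s} · (m + η) / (1+M)^n, where Ω_m is the Lebesgue volume of the unit ball of ℝ^m. In particular, for m = 4 this equals −π²·e^{(4−2n)s}·(η+4)/(2·Z^{n−1}·(1+M)^n), and for m = 3 it equals −(4π/3)·e^{(3−2n)s}·(η+3)/(Z^{n−1}·(1+M)^n). -/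
open Real MeasureTheory



open Set

section helpers

lemma vol4' : (volume (Metric.ball (0 : EuclideanSpace ℝ (Fin 4)) 1)).toReal = π ^ 2 / 2 := by
  rw [EuclideanSpace.volume_ball]
  simp only [Fintype.card_fin]
  rw [show ((4:ℕ):ℝ)/2 + 1 = ((2:ℕ):ℝ) + 1 by norm_num, Real.Gamma_nat_eq_factorial]
  norm_num
  rw [ENNReal.toReal_ofReal (by positivity)]
  rw [show Real.sqrt π ^ 4 = (Real.sqrt π ^ 2)^2 by ring, Real.sq_sqrt pi_pos.le]

lemma vol3' : (volume (Metric.ball (0 : EuclideanSpace ℝ (Fin 3)) 1)).toReal = 4 * π / 3 := by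
  rw [EuclideanSpace.volume_ball]
  simp only [Fintype.card_fin]
  have h1 : ((3:ℕ):ℝ)/2 + 1 = (3/2) + 1 := by norm_num
  rw [h1, Real.Gamma_add_one (by norm_num), show (3/2:ℝ) = 1/2 + 1 by norm_num,
    Real.Gamma_add_one (by norm_num), Real.Gamma_one_half_eq]
  norm_num
  rw [ENNReal.toReal_ofReal (by positivity)]
  rw [show Real.sqrt π ^ 3 = (Real.sqrt π ^ 2) * Real.sqrt π by ring, Real.sq_sqrt pi_pos.le]
  rw [div_eq_iff (by positivity)]
  ring

lemma key_integral' (m : ℕ) (hm : 1 ≤ m) (R c₁ c₂ q : ℝ) (hq : q < R) :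
    ∫ x in {x : EuclideanSpace ℝ (Fin m) | ‖x‖ ^ 2 ≤ R - q},
        (c₁ * (R - q - ‖x‖ ^ 2) + c₂)
      = (volume (Metric.ball (0 : EuclideanSpace ℝ (Fin m)) 1)).toReal
          * (2 * c₁ * (R - q) / (m + 2) + c₂) * Real.sqrt (R - q) ^ m := by
  obtain ⟨k, rfl⟩ : ∃ k, m = k + 1 := ⟨m - 1, (Nat.succ_pred_eq_of_pos hm).symm⟩
  haveI : Nonempty (Fin (k + 1)) := ⟨⟨0, by omega⟩⟩
  set a := Real.sqrt (R - q) with ha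
  have hRq : 0 ≤ R - q := by linarith
  have ha0 : 0 ≤ a := Real.sqrt_nonneg _
  have ha2 : a ^ 2 = R - q := Real.sq_sqrt hRq
  set h : ℝ → ℝ := fun r => c₁ * (R - q - r ^ 2) + c₂ with hh
  have hset : {x : EuclideanSpace ℝ (Fin (k + 1)) | ‖x‖ ^ 2 ≤ R - q}
      = (fun x : EuclideanSpace ℝ (Fin (k + 1)) => ‖x‖) ⁻¹' Iic a := by
    ext x
    simp only [mem_setOf_eq, mem_preimage, mem_Iic, ha]
    exact (Real.le_sqrt (norm_nonneg x) hRq).symm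
  have hcb : (fun x : EuclideanSpace ℝ (Fin (k + 1)) => ‖x‖) ⁻¹' Iic a
      = Metric.closedBall 0 a := by
    ext x; simp [Metric.mem_closedBall, dist_zero_right]
  rw [hset, ← integral_indicator (by rw [hcb]; exact measurableSet_closedBall)]
  have hind : (fun x : EuclideanSpace ℝ (Fin (k + 1)) =>
      ((fun x : EuclideanSpace ℝ (Fin (k + 1)) => ‖x‖) ⁻¹' Iic a).indicator
        (fun x => c₁ * (R - q - ‖x‖ ^ 2) + c₂) x)
      = fun x : EuclideanSpace ℝ (Fin (k + 1)) => (Iic a).indicator h ‖x‖ := by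
    funext x
    by_cases hx : ‖x‖ ∈ Iic a <;>
      simp [Set.indicator_apply, hx, hh]
  rw [hind, integral_fun_norm_addHaar volume ((Iic a).indicator h)]
  rw [finrank_euclideanSpace_fin]
  have hint : ∫ y in Ioi (0:ℝ), y ^ (k + 1 - 1) • (Iic a).indicator h y
      = ∫ y in Set.Ioc (0:ℝ) a, y ^ k * h y := by
    have : (fun y : ℝ => y ^ (k + 1 - 1) • (Iic a).indicator h y)
        = fun y : ℝ => (Iic a).indicator (fun y => y ^ k * h y) y := by
      funext y
      simp only [Nat.add_sub_cancel, smul_eq_mul, Set.indicator_apply]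
      by_cases hy : y ∈ Iic a <;> simp [hy]
    rw [this, setIntegral_indicator measurableSet_Iic, Set.Ioi_inter_Iic]
  rw [hint, ← intervalIntegral.integral_of_le ha0]
  have hpoly : ∫ y in (0:ℝ)..a, y ^ k * h y
      = (c₁ * (R - q) + c₂) * (a ^ (k + 1) / (k + 1)) - c₁ * (a ^ (k + 3) / (k + 3)) := by
    have hcong : ∀ y : ℝ, y ^ k * h y
        = (c₁ * (R - q) + c₂) * y ^ k - c₁ * y ^ (k + 2) := by
      intro y; simp only [hh]; ring
    rw [intervalIntegral.integral_congr (fun y _ => hcong y),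
      intervalIntegral.integral_sub (f := fun y => (c₁ * (R - q) + c₂) * y ^ k)
        (g := fun y => c₁ * y ^ (k + 2))
        ((continuous_const.mul (continuous_pow _)).intervalIntegrable _ _)
        ((continuous_const.mul (continuous_pow _)).intervalIntegrable _ _),
      intervalIntegral.integral_const_mul, intervalIntegral.integral_const_mul,
      integral_pow, integral_pow]
    rw [zero_pow (by omega), zero_pow (by omega)]
    push_cast
    ring
  rw [hpoly]
  rw [nsmul_eq_mul, smul_eq_mul]
  have hk1 : ((k:ℝ) + 1) ≠ 0 := by positivity
  have hk3 : ((k:ℝ) + 3) ≠ 0 := by positivity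
  have hsplit : a ^ (k + 3) = a ^ (k + 1) * (R - q) := by
    rw [← ha2]; ring
  rw [hsplit]
  push_cast
  simp only [measureReal_def]
  field_simp
  ring

end helpers

/-- derivative of the regulated loop integral with respect to the squared
external momentum at zero. With
`I(q) = ∫_{‖x‖² ≤ e^{2s}-q} Z(η(e^{2s}-q-‖x‖²)+2e^{2s})/(Ze^{2s}(1+M))^n dx`,
one has `I'(0) = -Ω_m Z^{1-n} e^{(m-2n)s}(m+η)/(1+M)^n`; in particular for `m = 4` this
equals `-π² e^{(4-2n)s}(η+4)/(2Z^{n-1}(1+M)^n)` and for `m = 3` it equals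
`-(4π/3) e^{(3-2n)s}(η+3)/(Z^{n-1}(1+M)^n)`. -/
theorem litim_loop_integral_derivative (m n : ℕ) (hm : 1 ≤ m)
    (s η M Z : ℝ) (hZ : 0 < Z) (hM : -1 < M) :
    HasDerivAt
      (fun q : ℝ => ∫ x in {x : EuclideanSpace ℝ (Fin m) | ‖x‖ ^ 2 ≤ exp (2 * s) - q},
        Z * (η * (exp (2 * s) - q - ‖x‖ ^ 2) + 2 * exp (2 * s))
          / (Z * exp (2 * s) * (1 + M)) ^ n)
      (-(volume (Metric.ball (0 : EuclideanSpace ℝ (Fin m)) 1)).toReal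
        * Z ^ ((1 : ℤ) - n) * exp (((m : ℝ) - 2 * n) * s) * ((m : ℝ) + η) / (1 + M) ^ n)
      0 ∧
    (m = 4 →
      -(volume (Metric.ball (0 : EuclideanSpace ℝ (Fin m)) 1)).toReal
          * Z ^ ((1 : ℤ) - n) * exp (((m : ℝ) - 2 * n) * s) * ((m : ℝ) + η) / (1 + M) ^ n
        = -(π ^ 2) * exp ((4 - 2 * (n : ℝ)) * s) * (η + 4)
            / (2 * Z ^ ((n : ℤ) - 1) * (1 + M) ^ n)) ∧
    (m = 3 →
      -(volume (Metric.ball (0 : EuclideanSpace ℝ (Fin m)) 1)).toReal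
          * Z ^ ((1 : ℤ) - n) * exp (((m : ℝ) - 2 * n) * s) * ((m : ℝ) + η) / (1 + M) ^ n
        = -(4 * π / 3) * exp ((3 - 2 * (n : ℝ)) * s) * (η + 3)
            / (Z ^ ((n : ℤ) - 1) * (1 + M) ^ n)) := by
  have hZ' : Z ≠ 0 := hZ.ne'
  have hM1 : (0:ℝ) < 1 + M := by linarith
  have hMn : ((1:ℝ) + M) ^ n ≠ 0 := pow_ne_zero _ hM1.ne'
  have hZn : Z ^ ((n:ℤ) - 1) ≠ 0 := zpow_ne_zero _ hZ'
  refine ⟨?_, ?_, ?_⟩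
  · -- main derivative
    set R : ℝ := exp (2 * s) with hRdef
    have hR : 0 < R := exp_pos _
    set D : ℝ := (Z * R * (1 + M)) ^ n with hD
    have hD0 : D ≠ 0 := pow_ne_zero _ (by positivity)
    set c₁ : ℝ := Z * η / D with hc₁
    set c₂ : ℝ := 2 * Z * R / D with hc₂
    set Ω : ℝ := (volume (Metric.ball (0 : EuclideanSpace ℝ (Fin m)) 1)).toReal with hΩ
    set p : ℝ := (m : ℝ) / 2 with hp
    -- the model function
    set φ : ℝ → ℝ := fun q => Ω * (2 * c₁ * (R - q) / (m + 2) + c₂) * (R - q) ^ p with hφ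
    have hderiv : HasDerivAt φ
        ((-(Ω * (2 * c₁) / (m + 2))) * R ^ p
          + Ω * (2 * c₁ * R / (m + 2) + c₂) * (-1 * p * R ^ (p - 1))) 0 := by
      have h₁ : HasDerivAt (fun q : ℝ => Ω * (2 * c₁ * (R - q) / (m + 2) + c₂))
          (-(Ω * (2 * c₁) / (m + 2))) 0 := by
        have : HasDerivAt (fun q : ℝ => R - q) (-1) 0 := by
          simpa using (hasDerivAt_id (0:ℝ)).const_sub R
        have := (((this.const_mul (2 * c₁)).div_const ((m:ℝ) + 2)).add_const c₂).const_mul Ω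
        refine this.congr_deriv ?_
        try ring
      have h₂ : HasDerivAt (fun q : ℝ => (R - q) ^ p) (-1 * p * R ^ (p - 1)) 0 := by
        have hid : HasDerivAt (fun q : ℝ => R - q) (-1) 0 := by
          simpa using (hasDerivAt_id (0:ℝ)).const_sub R
        have := hid.rpow_const (p := p) (by left; simpa using hR.ne')
        simpa using this
      have := h₁.mul h₂
      refine this.congr_deriv ?_
      simp [hφ]
      try ring
    have heq : φ =ᶠ[nhds (0:ℝ)] fun q : ℝ =>
        ∫ x in {x : EuclideanSpace ℝ (Fin m) | ‖x‖ ^ 2 ≤ R - q},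
          Z * (η * (R - q - ‖x‖ ^ 2) + 2 * R) / D := by
      filter_upwards [Iio_mem_nhds hR] with q hq
      have h1 : (fun x : EuclideanSpace ℝ (Fin m) =>
          Z * (η * (R - q - ‖x‖ ^ 2) + 2 * R) / D)
          = fun x : EuclideanSpace ℝ (Fin m) => c₁ * (R - q - ‖x‖ ^ 2) + c₂ := by
        funext x; rw [hc₁, hc₂]; ring
      rw [h1, key_integral' m hm R c₁ c₂ q hq]
      have hsq : Real.sqrt (R - q) ^ m = (R - q) ^ p := by
        have hRq : (0:ℝ) ≤ R - q := by
          have := hq; simp only [mem_Iio] at this; linarith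
        rw [Real.sqrt_eq_rpow, ← Real.rpow_natCast ((R - q) ^ ((1:ℝ)/2)) m,
          ← Real.rpow_mul hRq]
        congr 1
        rw [hp]; push_cast; ring
      rw [hφ, hsq]
    have := hderiv.congr_of_eventuallyEq heq.symm
    refine this.congr_deriv ?_
    -- value of the derivative
    have hRp : R ^ p = exp ((m:ℝ) * s) := by
      rw [Real.rpow_def_of_pos hR, hRdef, Real.log_exp]
      rw [hp]
      congr 1
      ring
    have hRp1 : R ^ (p - 1) = exp ((m:ℝ) * s) / R := by
      rw [Real.rpow_def_of_pos hR, hRdef, Real.log_exp,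
        show 2 * s * (p - 1) = (m:ℝ) * s - 2 * s by rw [hp]; ring, Real.exp_sub]
    have hzpow : Z ^ ((1:ℤ) - n) = Z / Z ^ n := by
      rw [zpow_sub₀ hZ', zpow_one, zpow_natCast]
    have hexp : exp (((m:ℝ) - 2 * n) * s) = exp ((m:ℝ) * s) / exp (2 * s) ^ n := by
      rw [← Real.exp_nat_mul, ← Real.exp_sub]
      congr 1
      ring
    rw [hRp, hRp1, hzpow, hexp, hc₁, hc₂, hD, hRdef]
    have hE : rexp (2 * s) ≠ 0 := (exp_pos _).ne'
    have hEn : rexp (2 * s) ^ n ≠ 0 := pow_ne_zero _ hE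
    have hZpn : Z ^ n ≠ 0 := pow_ne_zero _ hZ'
    have hm2 : ((m:ℝ) + 2) ≠ 0 := by positivity
    rw [mul_pow, mul_pow]
    field_simp
    ring
  · intro h4; subst h4
    rw [vol4']
    have hz2 : Z ^ ((1:ℤ) - n) = (Z ^ ((n:ℤ) - 1))⁻¹ := by
      rw [← zpow_neg]; congr 1; ring
    rw [hz2]
    push_cast
    field_simp
    ring
  · intro h3; subst h3
    rw [vol3']
    have hz2 : Z ^ ((1:ℤ) - n) = (Z ^ ((n:ℤ) - 1))⁻¹ := by
      rw [← zpow_neg]; congr 1; ring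
    rw [hz2]
    push_cast
    field_simp
    ring
end
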